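/- Let r ≥ 2 and a_1, …, a_r be integers ≥ 2. In the ℂ-algebra R := ℂ[x_1, …, x_r]/(x_i x_j for i ≠ j; a_i x_i^{a_i} − a_j x_j^{a_j} for i ≠ j), the family consisting of 1, the elements x_i^j for 1 ≤ i ≤ r and 1 ≤ j ≤ a_i − 1, and the element a_1 x_1^{a_1}, is a ℂ-vector space basis of R. -/

import Mathlib

open MvPolynomial

/-- The defining ideal of the degenerate quantum cohomology ring of `ℙ¹_{A}`. -/
noncomputable def relIdeal (r : ℕ) (a : Fin r → ℕ) : Ideal (MvPolynomial (Fin r) ℂ) :=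
  Ideal.span ({p | ∃ i j : Fin r, i ≠ j ∧ p = X i * X j} ∪
    {p | ∃ i j : Fin r, i ≠ j ∧
      p = C (a i : ℂ) * X i ^ (a i) - C (a j : ℂ) * X j ^ (a j)})

/-- The family `1`, `x_i^j` (`1 ≤ j ≤ a_i - 1`), `a_1 x_1^{a_1}` in the quotient ring. -/
noncomputable def basisFam (r : ℕ) (hr : 2 ≤ r) (a : Fin r → ℕ) :
    (Unit ⊕ ((Σ i : Fin r, Fin (a i - 1)) ⊕ Unit)) →
      (MvPolynomial (Fin r) ℂ ⧸ relIdeal r a)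
  | Sum.inl _ => 1
  | Sum.inr (Sum.inl ⟨i, j⟩) => Ideal.Quotient.mk (relIdeal r a) (X i ^ (j.val + 1))
  | Sum.inr (Sum.inr _) =>
      Ideal.Quotient.mk (relIdeal r a)
        (C (a ⟨0, by omega⟩ : ℂ) * X (⟨0, by omega⟩ : Fin r) ^ (a ⟨0, by omega⟩))

/-!
The family spans: modulo the ideal every monomial involving two variables vanishes, and so does
`x_i ^ n` for `n > a_i`, because `a_i x_i ^ (a_i + 1) = x_i · a_j x_j ^ a_j` is a multiple of
`x_i x_j`; the remaining monomials are `1`, the `x_i ^ j` with `0 < j < a_i`, and the `x_i ^ a_i`,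
which are all proportional to `a_1 x_1 ^ a_1`.

It is independent because the dual family of functionals (the coefficients of `1` and of the
`x_i ^ j`, together with `∑ i, a_i⁻¹ · coeff (x_i ^ a_i)`) vanishes on the ideal: the last one
takes the same value, the constant coefficient of `p`, on every `p · a_i x_i ^ a_i`.
-/

theorem map_eq_zero_of_mem_span_of_forall_mul {R M F : Type*} [CommSemiring R]
    [AddCommMonoid M] [FunLike F R M] [AddMonoidHomClass F R M] (φ : F) {S : Set R}
    (hS : ∀ s ∈ S, ∀ p, φ (p * s) = 0) {x : R} (hx : x ∈ Ideal.span S) : φ x = 0 := by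
  suffices ∀ p, φ (p * x) = 0 by simpa using this 1
  induction hx using Submodule.span_induction with
  | mem s hs => exact hS s hs
  | zero => simp
  | add y z _ _ hy hz => intro p; rw [mul_add, map_add, hy, hz, add_zero]
  | smul c y _ hy => intro p; rw [smul_eq_mul, ← mul_assoc, hy]

namespace MvPolynomial

variable {σ R : Type*} [CommSemiring R]

theorem coeff_single_mul_X_mul_X (p : MvPolynomial σ R) {i j : σ} (hij : i ≠ j) (k : σ)
    (n : ℕ) :
    coeff (Finsupp.single k n) (p * (X i * X j)) = 0 := by
  classical
  rw [← mul_assoc, coeff_mul_X', coeff_mul_X']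
  split_ifs with hj hi <;> try rfl
  simp only [Finsupp.mem_support_iff, Finsupp.tsub_apply, Finsupp.single_apply] at hi hj
  split_ifs at hi hj <;> simp_all

theorem coeff_single_mul_C_mul_X_pow_of_lt (p : MvPolynomial σ R) (c : R) {i k : σ} {m n : ℕ}
    (h : Finsupp.single k n i < m) : coeff (Finsupp.single k n) (p * (C c * X i ^ m)) = 0 := by
  rw [C_mul_X_pow_eq_monomial, coeff_mul_monomial', if_neg (by simpa [Finsupp.single_le_iff])]

theorem coeff_single_mul_C_mul_X_pow_self (p : MvPolynomial σ R) (c : R) (i : σ) (m : ℕ) :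
    coeff (Finsupp.single i m) (p * (C c * X i ^ m)) = coeff 0 p * c := by
  simpa [C_mul_X_pow_eq_monomial] using coeff_mul_monomial 0 (Finsupp.single i m) c p

end MvPolynomial

section

abbrev BasisIdx (r : ℕ) (a : Fin r → ℕ) := Unit ⊕ ((Σ i : Fin r, Fin (a i - 1)) ⊕ Unit)

variable {r : ℕ} {a : Fin r → ℕ}

noncomputable def topCoeff (a : Fin r → ℕ) : MvPolynomial (Fin r) ℂ →ₗ[ℂ] ℂ :=
  ∑ i, (a i : ℂ)⁻¹ • lcoeff ℂ (Finsupp.single i (a i))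

theorem topCoeff_apply (p : MvPolynomial (Fin r) ℂ) :
    topCoeff a p = ∑ i, (a i : ℂ)⁻¹ * coeff (Finsupp.single i (a i)) p := by
  simp [topCoeff]

noncomputable def dualCoeff (r : ℕ) (a : Fin r → ℕ) :
    MvPolynomial (Fin r) ℂ →ₗ[ℂ] (BasisIdx r a → ℂ) :=
  LinearMap.pi fun
    | .inl _ => lcoeff ℂ 0
    | .inr (.inl ⟨i, j⟩) => lcoeff ℂ (Finsupp.single i (j + 1))
    | .inr (.inr _) => topCoeff a

theorem topCoeff_mul_X_mul_X (p : MvPolynomial (Fin r) ℂ) {i j : Fin r} (hij : i ≠ j) :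
    topCoeff a (p * (X i * X j)) = 0 := by
  simp [topCoeff_apply, coeff_single_mul_X_mul_X p hij]

theorem topCoeff_mul_C_mul_X_pow (ha : ∀ k, 0 < a k) (p : MvPolynomial (Fin r) ℂ) (i : Fin r) :
    topCoeff a (p * (C (a i : ℂ) * X i ^ a i)) = coeff 0 p := by
  rw [topCoeff_apply, Finset.sum_eq_single i, coeff_single_mul_C_mul_X_pow_self,
    mul_comm (coeff 0 p), inv_mul_cancel_left₀ (by exact_mod_cast (ha i).ne')]
  · intro k _ hki
    rw [coeff_single_mul_C_mul_X_pow_of_lt, mul_zero]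
    simpa [Finsupp.single_apply, hki] using ha i
  · simp

theorem dualCoeff_mul_X_mul_X (p : MvPolynomial (Fin r) ℂ) {i j : Fin r} (hij : i ≠ j) :
    dualCoeff r a (p * (X i * X j)) = 0 := by
  ext (_ | ⟨k, t⟩ | _)
  · simpa [dualCoeff] using coeff_single_mul_X_mul_X p hij i 0
  · simpa [dualCoeff] using coeff_single_mul_X_mul_X p hij k (t + 1)
  · simpa [dualCoeff] using topCoeff_mul_X_mul_X p hij

theorem dualCoeff_mul_C_mul_X_pow (ha : ∀ k, 0 < a k) (p : MvPolynomial (Fin r) ℂ) (i : Fin r) :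
    dualCoeff r a (p * (C (a i : ℂ) * X i ^ a i)) = Pi.single (.inr (.inr ())) (coeff 0 p) := by
  ext (_ | ⟨k, t⟩ | _)
  · simpa [dualCoeff] using coeff_single_mul_C_mul_X_pow_of_lt p (a i : ℂ) (k := i) (n := 0)
      (by simpa using ha i)
  · have := t.isLt
    simpa [dualCoeff] using coeff_single_mul_C_mul_X_pow_of_lt p (a i : ℂ) (k := k) (n := t + 1)
      (by
        rw [Finsupp.single_apply]
        split_ifs with hki
        · subst hki; omega
        · exact ha i)
  · simpa [dualCoeff] using topCoeff_mul_C_mul_X_pow ha p i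

theorem dualCoeff_eq_zero_of_mem (ha : ∀ k, 0 < a k) {p : MvPolynomial (Fin r) ℂ}
    (hp : p ∈ relIdeal r a) : dualCoeff r a p = 0 := by
  refine map_eq_zero_of_mem_span_of_forall_mul _ ?_ hp
  rintro _ (⟨i, j, hij, rfl⟩ | ⟨i, j, -, rfl⟩) q
  · exact dualCoeff_mul_X_mul_X q hij
  · rw [mul_sub, map_sub, dualCoeff_mul_C_mul_X_pow ha, dualCoeff_mul_C_mul_X_pow ha, sub_self]

theorem dualCoeff_one (ha : ∀ k, 0 < a k) : dualCoeff r a 1 = Pi.single (.inl ()) 1 := by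
  classical
  ext (_ | ⟨k, t⟩ | _)
  · simp [dualCoeff]
  · simp [dualCoeff, coeff_one, eq_comm (a := (0 : Fin r →₀ ℕ))]
  · simp [dualCoeff, topCoeff_apply, coeff_one, eq_comm (a := (0 : Fin r →₀ ℕ)), (ha _).ne']

theorem dualCoeff_X_pow (i : Fin r) (j : Fin (a i - 1)) :
    dualCoeff r a (X i ^ (j.val + 1)) = Pi.single (.inr (.inl ⟨i, j⟩)) 1 := by
  classical
  ext (_ | ⟨k, t⟩ | _)
  · simp [dualCoeff, coeff_X_pow]
  · simp only [dualCoeff, LinearMap.pi_apply, lcoeff_apply, coeff_X_pow, Pi.single_apply,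
      Sum.inr.injEq, Sum.inl.injEq, Finsupp.single_eq_single_iff]
    congr 1
    apply propext
    constructor
    · rintro (⟨rfl, h⟩ | ⟨h, -⟩)
      · obtain rfl : j = t := Fin.ext (by omega)
        rfl
      · omega
    · rintro ⟨⟩
      simp
  · simp only [dualCoeff, LinearMap.pi_apply, topCoeff_apply, coeff_X_pow, Pi.single_apply]
    refine Finset.sum_eq_zero fun k _ => ?_
    rw [if_neg fun h => ?_, mul_zero]
    rcases (Finsupp.single_eq_single_iff _ _ _ _).1 h with ⟨rfl, h⟩ | ⟨h, -⟩ <;> omega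

theorem dualCoeff_C_mul_X_pow (ha : ∀ k, 0 < a k) (i : Fin r) :
    dualCoeff r a (C (a i : ℂ) * X i ^ a i) = Pi.single (.inr (.inr ())) 1 := by
  simpa using dualCoeff_mul_C_mul_X_pow ha 1 i

theorem linearIndependent_basisFam (hr : 2 ≤ r) (ha : ∀ k, 0 < a k) :
    LinearIndependent ℂ (basisFam r hr a) := by
  let I := (relIdeal r a).restrictScalars ℂ
  have hker : I ≤ LinearMap.ker (dualCoeff r a) := fun p hp => dualCoeff_eq_zero_of_mem ha hp
  let Φ := I.liftQ (dualCoeff r a) hker ∘ₗ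
    (Submodule.Quotient.restrictScalarsEquiv ℂ (relIdeal r a)).symm.toLinearMap
  have hΦ : Φ ∘ basisFam r hr a = Pi.basisFun ℂ (BasisIdx r a) := by
    ext1 (⟨⟩ | ⟨i, j⟩ | ⟨⟩) <;> rw [Function.comp_apply, Pi.basisFun_apply]
    · exact dualCoeff_one ha
    · exact dualCoeff_X_pow i j
    · exact dualCoeff_C_mul_X_pow ha _
  exact LinearIndependent.of_comp Φ (hΦ ▸ (Pi.basisFun ℂ _).linearIndependent)

theorem X_mul_X_mem_relIdeal {i j : Fin r} (hij : i ≠ j) : X i * X j ∈ relIdeal r a :=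
  Ideal.subset_span (Or.inl ⟨i, j, hij, rfl⟩)

theorem C_mul_X_pow_sub_mem_relIdeal (i j : Fin r) :
    C (a i : ℂ) * X i ^ a i - C (a j : ℂ) * X j ^ a j ∈ relIdeal r a := by
  rcases eq_or_ne i j with rfl | hij
  · simp
  · exact Ideal.subset_span (Or.inr ⟨i, j, hij, rfl⟩)

theorem monomial_mem_relIdeal {m : Fin r →₀ ℕ} {i j : Fin r} (hij : i ≠ j)
    (hi : i ∈ m.support) (hj : j ∈ m.support) (c : ℂ) : monomial m c ∈ relIdeal r a := by
  refine Ideal.mem_of_dvd _ ?_ (X_mul_X_mem_relIdeal hij)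
  rw [X, X, monomial_mul, one_mul, monomial_dvd_monomial]
  refine ⟨Or.inr fun k => ?_, one_dvd c⟩
  rw [Finsupp.mem_support_iff] at hi hj
  simp only [Finsupp.add_apply, Finsupp.single_apply]
  split_ifs <;> simp_all <;> omega

theorem X_pow_mem_relIdeal {i j : Fin r} (hij : i ≠ j) (hi : 0 < a i) (hj : 0 < a j) {n : ℕ}
    (hn : a i < n) : X i ^ n ∈ relIdeal r a := by
  obtain ⟨m, rfl⟩ := Nat.exists_eq_add_of_lt hn
  obtain ⟨t, ht⟩ := Nat.exists_eq_add_of_lt hj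
  have key : C (a i : ℂ) * X i ^ (a i + m + 1) =
      X i ^ (m + 1) * (C (a i : ℂ) * X i ^ a i - C (a j : ℂ) * X j ^ a j) +
        C (a j : ℂ) * X i ^ m * X j ^ t * (X i * X j) := by
    rw [ht]; ring
  have hunit : IsUnit (C (a i : ℂ) : MvPolynomial (Fin r) ℂ) :=
    (Ne.isUnit (Nat.cast_ne_zero.2 hi.ne')).map C
  rw [← Ideal.unit_mul_mem_iff_mem _ hunit, key]
  exact add_mem (Ideal.mul_mem_left _ _ (C_mul_X_pow_sub_mem_relIdeal i j))
    (Ideal.mul_mem_left _ _ (X_mul_X_mem_relIdeal hij))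

open Submodule in
theorem mk_X_pow_mem_span (hr : 2 ≤ r) (ha : ∀ k, 0 < a k) (i : Fin r) (n : ℕ) :
    Ideal.Quotient.mk (relIdeal r a) (X i ^ n) ∈ span ℂ (Set.range (basisFam r hr a)) := by
  rcases Nat.lt_trichotomy n (a i) with hn | rfl | hn
  · rcases n.eq_zero_or_pos with rfl | hn0
    · exact subset_span ⟨.inl (), by simp [basisFam]⟩
    · refine subset_span ⟨.inr (.inl ⟨i, ⟨n - 1, by omega⟩⟩), ?_⟩
      simp only [basisFam, Nat.sub_add_cancel hn0]
  · have htop : Ideal.Quotient.mk (relIdeal r a) (C (a i : ℂ) * X i ^ a i) =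
        basisFam r hr a (.inr (.inr ())) :=
      Ideal.Quotient.eq.2 (C_mul_X_pow_sub_mem_relIdeal _ _)
    have hinv : Ideal.Quotient.mk (relIdeal r a) (X i ^ a i) =
        (a i : ℂ)⁻¹ • Ideal.Quotient.mk (relIdeal r a) (C (a i : ℂ) * X i ^ a i) := by
      rw [← smul_eq_C_mul, ← Ideal.Quotient.mkₐ_eq_mk ℂ, map_smul, smul_smul,
        inv_mul_cancel₀ (by exact_mod_cast (ha i).ne'), one_smul]
    rw [hinv, htop]
    exact smul_mem _ _ (subset_span ⟨_, rfl⟩)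
  · have : Nontrivial (Fin r) := Fin.nontrivial_iff_two_le.2 hr
    obtain ⟨j, hij⟩ := exists_ne i
    rw [Ideal.Quotient.eq_zero_iff_mem.2 (X_pow_mem_relIdeal hij.symm (ha i) (ha j) hn)]
    exact zero_mem _

open Submodule in
theorem mk_monomial_mem_span (hr : 2 ≤ r) (ha : ∀ k, 0 < a k) (m : Fin r →₀ ℕ) :
    Ideal.Quotient.mk (relIdeal r a) (monomial m 1) ∈ span ℂ (Set.range (basisFam r hr a)) := by
  by_cases hm : 1 < m.support.card
  · obtain ⟨i, hi, j, hj, hij⟩ := Finset.one_lt_card.1 hm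
    rw [Ideal.Quotient.eq_zero_iff_mem.2 (monomial_mem_relIdeal hij hi hj 1)]
    exact zero_mem _
  · have : Nonempty (Fin r) := ⟨⟨0, by omega⟩⟩
    obtain ⟨i, n, rfl⟩ := Finsupp.card_support_le_one'.1 (not_lt.1 hm)
    rw [← X_pow_eq_monomial]
    exact mk_X_pow_mem_span hr ha i n

open Submodule in
theorem top_le_span_range_basisFam (hr : 2 ≤ r) (ha : ∀ k, 0 < a k) :
    ⊤ ≤ span ℂ (Set.range (basisFam r hr a)) := by
  rintro z -
  obtain ⟨p, rfl⟩ := Ideal.Quotient.mk_surjective z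
  induction p using MvPolynomial.induction_on' with
  | monomial m c =>
    rw [← mul_one c, ← smul_eq_mul, ← smul_monomial, ← Ideal.Quotient.mkₐ_eq_mk ℂ,
      map_smul]
    exact smul_mem _ c (mk_monomial_mem_span hr ha m)
  | add p q hp hq => rw [map_add]; exact add_mem hp hq

end

theorem basisFam_is_basis (r : ℕ) (hr : 2 ≤ r) (a : Fin r → ℕ) (ha : ∀ k, 2 ≤ a k) :
    ∃ B : Module.Basis (Unit ⊕ ((Σ i : Fin r, Fin (a i - 1)) ⊕ Unit)) ℂ
      (MvPolynomial (Fin r) ℂ ⧸ relIdeal r a), ⇑B = basisFam r hr a := by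
  have ha' : ∀ k, 0 < a k := fun k => zero_lt_two.trans_le (ha k)
  exact ⟨.mk (linearIndependent_basisFam hr ha') (top_le_span_range_basisFam hr ha'),
    Module.Basis.coe_mk _ _⟩
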